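/- Under a lex-optimal allocation with at least two distinct exchange ratio levels, the minimum level l_1 and the maximum level l_K satisfy l_1 · l_K = 1. -/

import Mathlib

open Finset

noncomputable section

variable {V : Type*}

/-- An allocation: nonnegative, supported on edges, each node distributes its full endowment. -/
def IsAlloc [Fintype V] [DecidableEq V] (G : SimpleGraph V) [DecidableRel G.Adj]
    (D : V → ℝ) (d : V → V → ℝ) : Prop :=
  (∀ i j, 0 ≤ d i j) ∧ (∀ i j, ¬ G.Adj i j → d i j = 0) ∧
  (∀ i, ∑ j ∈ G.neighborFinset i, d i j = D i)

/-- Received resource of node `i`. -/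
def recv [Fintype V] [DecidableEq V] (G : SimpleGraph V) [DecidableRel G.Adj]
    (d : V → V → ℝ) (i : V) : ℝ := ∑ j ∈ G.neighborFinset i, d j i

/-- Exchange ratio of node `i`. -/
def ratio [Fintype V] [DecidableEq V] (G : SimpleGraph V) [DecidableRel G.Adj]
    (D : V → ℝ) (d : V → V → ℝ) (i : V) : ℝ := recv G d i / D i

/-- Total resource flowing into `S` from outside. -/
def inFlow [Fintype V] [DecidableEq V] (G : SimpleGraph V) [DecidableRel G.Adj]
    (d : V → V → ℝ) (S : Finset V) : ℝ :=
  ∑ i ∈ S, ∑ j ∈ G.neighborFinset i \ S, d j i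

/-- Total resource flowing out of `S`. -/
def outFlow [Fintype V] [DecidableEq V] (G : SimpleGraph V) [DecidableRel G.Adj]
    (d : V → V → ℝ) (S : Finset V) : ℝ :=
  ∑ i ∈ S, ∑ j ∈ G.neighborFinset i \ S, d i j

/-- Sorted (non-decreasing) list of exchange ratios. -/
def sortedRatios [Fintype V] [DecidableEq V] (G : SimpleGraph V) [DecidableRel G.Adj]
    (D : V → ℝ) (d : V → V → ℝ) : List ℝ :=
  (Finset.univ.val.map (ratio G D d)).sort (· ≤ ·)

/-- Lexicographic optimality: no allocation gives a lexicographically larger sorted ratio vector. -/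
def LexOpt [Fintype V] [DecidableEq V] (G : SimpleGraph V) [DecidableRel G.Adj]
    (D : V → ℝ) (d : V → V → ℝ) : Prop :=
  IsAlloc G D d ∧ ∀ d', IsAlloc G D d' →
    ¬ List.Lex (· < ·) (sortedRatios G D d) (sortedRatios G D d')

/-- Minimum exchange ratio. -/
def minRatio [Fintype V] [Nonempty V] [DecidableEq V] (G : SimpleGraph V) [DecidableRel G.Adj]
    (D : V → ℝ) (d : V → V → ℝ) : ℝ := Finset.univ.inf' Finset.univ_nonempty (ratio G D d)

/-- Maximum exchange ratio. -/
def maxRatio [Fintype V] [Nonempty V] [DecidableEq V] (G : SimpleGraph V) [DecidableRel G.Adj]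
    (D : V → ℝ) (d : V → V → ℝ) : ℝ := Finset.univ.sup' Finset.univ_nonempty (ratio G D d)

/-- The set `L₁` of nodes attaining the minimum exchange ratio. -/
def minSet [Fintype V] [Nonempty V] [DecidableEq V] (G : SimpleGraph V) [DecidableRel G.Adj]
    (D : V → ℝ) (d : V → V → ℝ) : Finset V :=
  Finset.univ.filter (fun i => ratio G D d i = minRatio G D d)

/-- The set `L_K` of nodes attaining the maximum exchange ratio. -/
def maxSet [Fintype V] [Nonempty V] [DecidableEq V] (G : SimpleGraph V) [DecidableRel G.Adj]
    (D : V → ℝ) (d : V → V → ℝ) : Finset V :=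
  Finset.univ.filter (fun i => ratio G D d i = maxRatio G D d)

/-- External neighborhood of a set of nodes. -/
def extNbhd [Fintype V] [DecidableEq V] (G : SimpleGraph V) [DecidableRel G.Adj]
    (S : Finset V) : Finset V := (S.biUnion fun i => G.neighborFinset i) \ S


/-!
In a lex-optimal allocation every node sends only to its neighbours of least exchange ratio:
otherwise moving a little of its flow from a richer to a poorer neighbour raises the sorted ratio
vector lexicographically. Let `S` be the nodes of minimal ratio `m`, `N` the neighbourhood of `S`,
`U` the nodes of maximal ratio `M` and `W` the nodes all of whose neighbours lie in `U`. Counting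
where the flow of each node goes gives `D(S) ≤ recv(N) ≤ M D(N)` and `D(N) ≤ recv(S) = m D(S)`,
hence `m M ≥ 1`; and `M D(U) = recv(U) ≤ D(W)` and `m D(W) ≤ recv(W) ≤ D(U)`, hence `m M ≤ 1`.
-/

theorem List.lex_lt_of_count_lt {α : Type*} [LinearOrder α] {s t : List α}
    (hs : s.Pairwise (· ≤ ·)) (ht : t.Pairwise (· ≤ ·)) (hlen : s.length = t.length) {v : α}
    (hbelow : ∀ z < v, s.count z = t.count z) (hv : t.count v < s.count v) :
    List.Lex (· < ·) s t := by
  induction s generalizing t with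
  | nil => simp at hv
  | cons x s ih =>
    cases t with
    | nil => simp at hlen
    | cons y t =>
      rw [List.pairwise_cons] at hs ht
      have hxv : x ≤ v := by
        rcases List.mem_cons.mp (List.count_pos_iff.mp ((Nat.zero_le _).trans_lt hv)) with h | h
        · exact h.ge
        · exact hs.1 v h
      rcases lt_trichotomy x y with hxy | rfl | hyx
      · exact List.Lex.rel hxy
      · refine List.Lex.cons (ih hs.2 ht.2 (by simpa using hlen) (fun z hz => ?_) ?_)
        · simpa [List.count_cons] using hbelow z hz
        · simpa [List.count_cons] using hv
      · exfalso
        have hys : y ∈ x :: s := by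
          rw [← List.count_pos_iff, hbelow y (hyx.trans_le hxv)]
          exact List.count_pos_iff.mpr List.mem_cons_self
        rcases List.mem_cons.mp hys with h | h
        · exact hyx.ne h
        · exact (hs.1 y h).not_gt hyx

theorem lex_sort_map_of_raise {ι α : Type*} [Fintype ι] [LinearOrder α] {f g : ι → α} {i : ι}
    (hi : f i < g i) (hrest : ∀ u ≠ i, g u = f u ∨ (f i < f u ∧ f i < g u)) :
    List.Lex (· < ·) ((univ.val.map f).sort (· ≤ ·)) ((univ.val.map g).sort (· ≤ ·)) := by
  classical
  have count_sort : ∀ (h : ι → α) z, ((univ.val.map h).sort (· ≤ ·)).count z = #{u | z = h u} := by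
    intro h z
    rw [← Multiset.coe_count, Multiset.sort_eq, Multiset.count_map, card_def, filter_val]
  refine List.lex_lt_of_count_lt (Multiset.pairwise_sort _ _) (Multiset.pairwise_sort _ _)
    (by simp) (v := f i) (fun z hz => ?_) ?_
  · rw [count_sort, count_sort]
    congr 1
    refine filter_congr fun u _ => ?_
    by_cases hu : u = i
    · subst hu
      exact iff_of_false hz.ne (hz.trans hi).ne
    · rcases hrest u hu with h | ⟨h₁, h₂⟩
      · rw [h]
      · exact iff_of_false (hz.trans h₁).ne (hz.trans h₂).ne
  · rw [count_sort, count_sort]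
    refine card_lt_card ⟨fun u hu => ?_, fun hsub => ?_⟩
    · simp only [mem_filter, mem_univ, true_and] at hu ⊢
      have hui : u ≠ i := by rintro rfl; exact hi.ne hu
      rcases hrest u hui with h | ⟨-, h⟩
      · rw [hu, h]
      · exact absurd hu h.ne
    · simpa using (hi.ne (by simpa using hsub (by simp : i ∈ _)))

section Allocation

variable [Fintype V] [DecidableEq V] {G : SimpleGraph V} [DecidableRel G.Adj] {D : V → ℝ}
  {d : V → V → ℝ}

namespace IsAlloc

theorem eq_zero_of_not_pos (hd : IsAlloc G D d) {a b : V} (h : ¬ 0 < d a b) : d a b = 0 :=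
  le_antisymm (not_lt.mp h) (hd.1 a b)

theorem adj_of_pos (hd : IsAlloc G D d) {a b : V} (h : 0 < d a b) : G.Adj a b := by
  by_contra hab
  exact h.ne' (hd.2.1 a b hab)

theorem recv_eq_sum (hd : IsAlloc G D d) (x : V) : recv G d x = ∑ a, d a x :=
  sum_subset (subset_univ _) fun _ _ ha =>
    hd.eq_zero_of_not_pos fun h => ha (by simpa using (hd.adj_of_pos h).symm)

theorem sum_eq (hd : IsAlloc G D d) (a : V) : ∑ b, d a b = D a :=
  hd.2.2 a ▸ (sum_subset (subset_univ _) fun _ _ hb =>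
    hd.eq_zero_of_not_pos fun h => hb (by simpa using hd.adj_of_pos h)).symm

theorem sum_le_sum_recv (hd : IsAlloc G D d) {A B : Finset V}
    (h : ∀ l ∈ B, ∀ x, 0 < d l x → x ∈ A) : ∑ l ∈ B, D l ≤ ∑ x ∈ A, recv G d x :=
  calc ∑ l ∈ B, D l = ∑ l ∈ B, ∑ x ∈ A, d l x := sum_congr rfl fun l hl => by
        rw [← hd.sum_eq l, sum_subset (subset_univ A) fun x _ hx =>
          hd.eq_zero_of_not_pos fun hpos => hx (h l hl x hpos)]
    _ ≤ ∑ l, ∑ x ∈ A, d l x :=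
        sum_le_sum_of_subset_of_nonneg (subset_univ B) fun l _ _ => sum_nonneg fun x _ => hd.1 l x
    _ = ∑ x ∈ A, recv G d x := by simp only [sum_comm (s := univ), hd.recv_eq_sum]

theorem sum_recv_le_sum (hd : IsAlloc G D d) {A B : Finset V}
    (h : ∀ x ∈ A, ∀ l, 0 < d l x → l ∈ B) : ∑ x ∈ A, recv G d x ≤ ∑ l ∈ B, D l :=
  calc ∑ x ∈ A, recv G d x = ∑ l, ∑ x ∈ A, d l x := by
        simp only [sum_comm (s := univ), hd.recv_eq_sum]
    _ = ∑ l ∈ B, ∑ x ∈ A, d l x := (sum_subset (subset_univ B) fun l _ hl => sum_eq_zero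
        fun x hx => hd.eq_zero_of_not_pos fun hpos => hl (h x hx l hpos)).symm
    _ ≤ ∑ l ∈ B, D l := sum_le_sum fun l _ => hd.sum_eq l ▸
        sum_le_sum_of_subset_of_nonneg (subset_univ A) fun x _ _ => hd.1 l x

theorem ratio_nonneg (hd : IsAlloc G D d) (hD : ∀ i, 0 < D i) (x : V) : 0 ≤ ratio G D d x :=
  div_nonneg (sum_nonneg fun a _ => hd.1 a x) (hD x).le

end IsAlloc

theorem recv_eq_ratio_mul (hD : ∀ i, 0 < D i) (x : V) : recv G d x = ratio G D d x * D x :=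
  (div_mul_cancel₀ _ (hD x).ne').symm

theorem sum_recv_le_mul_sum (hD : ∀ i, 0 < D i) {A : Finset V} {r : ℝ}
    (h : ∀ x ∈ A, ratio G D d x ≤ r) : ∑ x ∈ A, recv G d x ≤ r * ∑ x ∈ A, D x := by
  rw [mul_sum]
  exact sum_le_sum fun x hx => recv_eq_ratio_mul (G := G) (d := d) hD x ▸
    mul_le_mul_of_nonneg_right (h x hx) (hD x).le

theorem mul_sum_le_sum_recv (hD : ∀ i, 0 < D i) {A : Finset V} {r : ℝ}
    (h : ∀ x ∈ A, r ≤ ratio G D d x) : r * ∑ x ∈ A, D x ≤ ∑ x ∈ A, recv G d x := by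
  rw [mul_sum]
  exact sum_le_sum fun x hx => recv_eq_ratio_mul (G := G) (d := d) hD x ▸
    mul_le_mul_of_nonneg_right (h x hx) (hD x).le

def redirect (d : V → V → ℝ) (j k i : V) (ε : ℝ) : V → V → ℝ :=
  fun a b => d a b + (if a = j ∧ b = i then ε else 0) - (if a = j ∧ b = k then ε else 0)

theorem IsAlloc.redirect (hd : IsAlloc G D d) {j k i : V} {ε : ℝ} (hε : 0 ≤ ε)
    (hεd : ε ≤ d j k) (hjk : G.Adj j k) (hji : G.Adj j i) :
    IsAlloc G D (redirect d j k i ε) := by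
  refine ⟨fun a b => ?_, fun a b hab => ?_, fun a => ?_⟩
  · unfold _root_.redirect
    by_cases h : a = j ∧ b = k
    · obtain ⟨rfl, rfl⟩ := h
      split_ifs <;> linarith
    · have := hd.1 a b
      split_ifs <;> linarith
  · have hi : ¬ (a = j ∧ b = i) := fun h => hab (h.1 ▸ h.2 ▸ hji)
    have hk : ¬ (a = j ∧ b = k) := fun h => hab (h.1 ▸ h.2 ▸ hjk)
    simp [_root_.redirect, hi, hk, hd.2.1 a b hab]
  · by_cases ha : a = j
    · subst ha
      simp [_root_.redirect, sum_add_distrib, sum_sub_distrib, hd.2.2, hjk, hji]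
    · simp [_root_.redirect, ha, hd.2.2]

theorem recv_redirect {j k i : V} {ε : ℝ}
    (hjk : G.Adj j k) (hji : G.Adj j i) (x : V) :
    recv G (redirect d j k i ε) x =
      recv G d x + (if x = i then ε else 0) - (if x = k then ε else 0) := by
  simp only [recv, redirect, sum_add_distrib, sum_sub_distrib]
  congr 2
  · by_cases hx : x = i
    · subst hx; simp [hji.symm]
    · simp [hx]
  · by_cases hx : x = k
    · subst hx; simp [hjk.symm]
    · simp [hx]

def SendsToPoorest (G : SimpleGraph V) [DecidableRel G.Adj] (D : V → ℝ) (d : V → V → ℝ) :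
    Prop :=
  ∀ j k i, 0 < d j k → G.Adj j i → ratio G D d k ≤ ratio G D d i

theorem LexOpt.sendsToPoorest (hD : ∀ i, 0 < D i) (hopt : LexOpt G D d) :
    SendsToPoorest G D d := by
  intro j k i hjk hji
  by_contra! hik
  obtain ⟨hd, hmax⟩ := hopt
  have hadj : G.Adj j k := hd.adj_of_pos hjk
  have hne : i ≠ k := by rintro rfl; exact hik.false
  set ε := min (d j k) ((ratio G D d k - ratio G D d i) * D k / 2)
  have hDk := hD k
  have hε : 0 < ε := lt_min hjk (by nlinarith)
  have hεk : ε / D k < ratio G D d k - ratio G D d i := by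
    rw [div_lt_iff₀ hDk]
    nlinarith [min_le_right (d j k) ((ratio G D d k - ratio G D d i) * D k / 2)]
  have hratio : ∀ x, ratio G D (redirect d j k i ε) x =
      ratio G D d x + ((if x = i then ε else 0) - (if x = k then ε else 0)) / D x := by
    intro x
    rw [ratio, recv_redirect hadj hji, add_sub_assoc, add_div]
    rfl
  refine hmax _ (hd.redirect hε.le (min_le_left _ _) hadj hji)
    (lex_sort_map_of_raise (i := i) ?_ ?_)
  · rw [hratio, if_pos rfl, if_neg hne]
    simpa using div_pos hε (hD i)
  · intro u hu
    rw [hratio, if_neg hu]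
    by_cases huk : u = k
    · subst huk
      rw [if_pos rfl, zero_sub, neg_div]
      exact Or.inr ⟨hik, by linarith⟩
    · simp [huk]

variable [Nonempty V]

theorem minRatio_le_ratio (x : V) : minRatio G D d ≤ ratio G D d x :=
  inf'_le _ (mem_univ x)

theorem ratio_le_maxRatio (x : V) : ratio G D d x ≤ maxRatio G D d :=
  le_sup' _ (mem_univ x)

theorem mem_minSet {x : V} : x ∈ minSet G D d ↔ ratio G D d x = minRatio G D d := by
  simp [minSet]

theorem mem_maxSet {x : V} : x ∈ maxSet G D d ↔ ratio G D d x = maxRatio G D d := by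
  simp [maxSet]

theorem minSet_nonempty : (minSet G D d).Nonempty :=
  let ⟨x, _, hx⟩ := exists_mem_eq_inf' univ_nonempty (ratio G D d)
  ⟨x, mem_minSet.mpr hx.symm⟩

theorem maxSet_nonempty : (maxSet G D d).Nonempty :=
  let ⟨x, _, hx⟩ := exists_mem_eq_sup' univ_nonempty (ratio G D d)
  ⟨x, mem_maxSet.mpr hx.symm⟩

theorem IsAlloc.one_le_minRatio_mul_maxRatio (hd : IsAlloc G D d) (hD : ∀ i, 0 < D i)
    (hs : SendsToPoorest G D d) : 1 ≤ minRatio G D d * maxRatio G D d := by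
  set S := minSet G D d
  set N := S.biUnion fun l => G.neighborFinset l
  have hSN : ∑ l ∈ S, D l ≤ maxRatio G D d * ∑ x ∈ N, D x :=
    (hd.sum_le_sum_recv fun l hl x hx =>
        mem_biUnion.mpr ⟨l, hl, by simpa using hd.adj_of_pos hx⟩).trans
      (sum_recv_le_mul_sum hD fun x _ => ratio_le_maxRatio x)
  have hNS : ∑ l ∈ N, D l ≤ minRatio G D d * ∑ x ∈ S, D x := by
    refine (hd.sum_le_sum_recv fun l hl x hx => ?_).trans
      (sum_recv_le_mul_sum hD fun x hx => (mem_minSet.mp hx).le)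
    obtain ⟨u, hu, hul⟩ := mem_biUnion.mp hl
    have hxu : ratio G D d x ≤ ratio G D d u := hs l x u hx ((G.mem_neighborFinset u l).mp hul).symm
    exact mem_minSet.mpr ((mem_minSet.mp hu ▸ hxu).antisymm (minRatio_le_ratio x))
  have hS : 0 < ∑ x ∈ S, D x := sum_pos (fun x _ => hD x) minSet_nonempty
  have hM : 0 ≤ maxRatio G D d :=
    (hd.ratio_nonneg hD _).trans (ratio_le_maxRatio (Classical.arbitrary V))
  nlinarith [mul_le_mul_of_nonneg_left hNS hM]

theorem IsAlloc.minRatio_mul_maxRatio_le_one (hd : IsAlloc G D d) (hD : ∀ i, 0 < D i)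
    (hs : SendsToPoorest G D d) : minRatio G D d * maxRatio G D d ≤ 1 := by
  set U := maxSet G D d
  set W := univ.filter fun l => G.neighborFinset l ⊆ U
  have hUW : maxRatio G D d * ∑ x ∈ U, D x ≤ ∑ l ∈ W, D l := by
    refine (mul_sum_le_sum_recv hD fun x hx => (mem_maxSet.mp hx).ge).trans
      (hd.sum_recv_le_sum fun x hx l hl => mem_filter.mpr ⟨mem_univ l, fun y hy => ?_⟩)
    exact mem_maxSet.mpr ((ratio_le_maxRatio y).antisymm
      (mem_maxSet.mp hx ▸ hs l x y hl (by simpa using hy)))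
  have hWU : minRatio G D d * ∑ x ∈ W, D x ≤ ∑ l ∈ U, D l :=
    (mul_sum_le_sum_recv hD fun x _ => minRatio_le_ratio x).trans
      (hd.sum_recv_le_sum fun x hx l hl =>
        (mem_filter.mp hx).2 (by simpa using (hd.adj_of_pos hl).symm))
  have hU : 0 < ∑ x ∈ U, D x := sum_pos (fun x _ => hD x) maxSet_nonempty
  have hm : 0 ≤ minRatio G D d := le_inf' _ _ fun x _ => hd.ratio_nonneg hD x
  nlinarith [mul_le_mul_of_nonneg_left hUW hm]

end Allocation

theorem stmt9_general [Fintype V] [Nonempty V] [DecidableEq V] (G : SimpleGraph V) [DecidableRel G.Adj]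
    (D : V → ℝ) (hD : ∀ i, 0 < D i) (d : V → V → ℝ)
    (hopt : LexOpt G D d) :
    minRatio G D d * maxRatio G D d = 1 :=
  have hs := hopt.sendsToPoorest hD
  le_antisymm (hopt.1.minRatio_mul_maxRatio_le_one hD hs)
    (hopt.1.one_le_minRatio_mul_maxRatio hD hs)

theorem stmt9 [Fintype V] [Nonempty V] [DecidableEq V] (G : SimpleGraph V) [DecidableRel G.Adj]
    (hconn : G.Connected) (D : V → ℝ) (hD : ∀ i, 0 < D i) (d : V → V → ℝ)
    (hopt : LexOpt G D d) (hK : ∃ i j, ratio G D d i ≠ ratio G D d j) :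
    minRatio G D d * maxRatio G D d = 1 :=
  stmt9_general G D hD d hopt
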